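/- For every integer n ≥ 3, the Italian domination number of the cartesian product C₃ □ C_n of directed cycles equals 2n. -/

import Mathlib

/-!
Read `f` column by column, `c j = f (·, j)`, and let `z j` be the number of zeros in `c j`.
The in-neighbours of `(i, j)` are `(i, j - 1)` and `(i - 1, j)`, so every zero of `f` sees a
total value of at least `2` there. Comparing the zero patterns of two consecutive columns gives
`2 + z j ≤ weight (c (j - 1)) + z (j - 1)`; summed around the cycle the `z` terms cancel, so
every Italian dominating function has weight at least `2n`. Conversely, if `χ` is a proper
`3`-colouring of the cycle `C_n`, the function that is `0` at `(χ j, j)` and `1` elsewhere has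
weight `2n`, and each of its zeros has two in-neighbours of value `1`.
-/

/-- An Italian dominating function on a digraph given by adjacency relation `adj`:
`f : V → {0,1,2}` such that every vertex with value 0 has an in-neighbor with value 2
or two distinct in-neighbors with value 1. -/
def IsIDF {V : Type*} (adj : V → V → Prop) (f : V → ℕ) : Prop :=
  (∀ v, f v ≤ 2) ∧ ∀ v, f v = 0 →
    (∃ w, adj w v ∧ f w = 2) ∨
    (∃ w₁ w₂, w₁ ≠ w₂ ∧ adj w₁ v ∧ adj w₂ v ∧ f w₁ = 1 ∧ f w₂ = 1)

/-- The Italian domination number: minimum weight of an Italian dominating function. -/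
noncomputable def italianDomNum (V : Type*) [Fintype V] (adj : V → V → Prop) : ℕ :=
  sInf {w : ℕ | ∃ f : V → ℕ, IsIDF adj f ∧ ∑ v, f v = w}

/-- The directed cycle on `n` vertices: arc `i → i+1 (mod n)`. -/
def cycleAdj (n : ℕ) (i j : Fin n) : Prop := (j : ℕ) = ((i : ℕ) + 1) % n

/-- Cartesian product of digraphs. -/
def cartAdj {α β : Type*} (A : α → α → Prop) (B : β → β → Prop) (x y : α × β) : Prop :=
  (x.1 = y.1 ∧ B x.2 y.2) ∨ (A x.1 y.1 ∧ x.2 = y.2)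

/-- Strong product of digraphs. -/
def strongAdj {α β : Type*} (A : α → α → Prop) (B : β → β → Prop) (x y : α × β) : Prop :=
  (A x.1 y.1 ∧ B x.2 y.2) ∨ (x.1 = y.1 ∧ B x.2 y.2) ∨ (A x.1 y.1 ∧ x.2 = y.2)

/-- Maximum out-degree of a finite digraph. -/
noncomputable def maxOutDeg (V : Type*) [Fintype V] (adj : V → V → Prop) : ℕ :=
  Finset.univ.sup fun v => Nat.card {w | adj v w}

/-- Maximum in-degree of a finite digraph. -/
noncomputable def maxInDeg (V : Type*) [Fintype V] (adj : V → V → Prop) : ℕ :=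
  Finset.univ.sup fun v => Nat.card {w | adj w v}

open Finset

theorem isIDF_iff_of_inNeighbors {V : Type*} {adj : V → V → Prop} (p q : V → V)
    (hadj : ∀ w v, adj w v ↔ w = p v ∨ w = q v) (hpq : ∀ v, p v ≠ q v) {f : V → ℕ} :
    IsIDF adj f ↔ (∀ v, f v ≤ 2) ∧ ∀ v, f v = 0 → 2 ≤ f (p v) + f (q v) := by
  refine and_congr_right fun hf2 => forall_congr' fun v => imp_congr_right fun _ => ?_
  simp only [hadj]
  constructor
  · rintro (⟨w, hw | hw, h2⟩ | ⟨w₁, w₂, hne, hw₁ | hw₁, hw₂ | hw₂, h₁, h₂⟩) <;> subst_vars <;>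
      first | omega | exact absurd rfl hne
  · intro h
    have := hf2 (p v); have := hf2 (q v)
    by_cases hp : f (p v) = 2
    · exact .inl ⟨p v, .inl rfl, hp⟩
    by_cases hq : f (q v) = 2
    · exact .inl ⟨q v, .inr rfl, hq⟩
    exact .inr ⟨p v, q v, hpq v, .inl rfl, .inr rfl, by omega, by omega⟩

theorem cycleAdj_iff {n : ℕ} [NeZero n] {i j : Fin n} : cycleAdj n i j ↔ i = j - 1 := by
  rw [eq_sub_iff_add_eq, eq_comm, Fin.ext_iff, Fin.val_add, Fin.val_one', Nat.add_mod_mod]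
  rfl

theorem cartAdj_cycleAdj_iff {m n : ℕ} [NeZero m] [NeZero n] {w v : Fin m × Fin n} :
    cartAdj (cycleAdj m) (cycleAdj n) w v ↔ w = (v.1, v.2 - 1) ∨ w = (v.1 - 1, v.2) := by
  simp only [cartAdj, cycleAdj_iff, Prod.ext_iff]

theorem isIDF_cartAdj_cycleAdj_iff {m n : ℕ} [NeZero m] [NeZero n] (hm : 1 < m)
    {f : Fin m × Fin n → ℕ} :
    IsIDF (cartAdj (cycleAdj m) (cycleAdj n)) f ↔
      (∀ v, f v ≤ 2) ∧ ∀ v, f v = 0 → 2 ≤ f (v.1, v.2 - 1) + f (v.1 - 1, v.2) := by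
  refine isIDF_iff_of_inNeighbors _ _ (fun _ _ => cartAdj_cycleAdj_iff) fun v h => ?_
  have h1 : (1 : Fin m) ≠ 0 := by
    rw [Ne, Fin.ext_iff, Fin.val_one', Fin.val_zero, Nat.mod_eq_of_lt hm]; exact one_ne_zero
  exact h1 (sub_eq_self.1 (congrArg Prod.fst h).symm)

theorem column_potential (a b : Fin 3 → ℕ) (h : ∀ i, b i = 0 → 2 ≤ b (i - 1) + a i) :
    2 + #{i | b i = 0} ≤ ∑ i, a i + #{i | a i = 0} := by
  have h0 := h 0; have h1 := h 1; have h2 := h 2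
  simp only [card_filter, Fin.sum_univ_three] at h0 h1 h2 ⊢
  simp only [show (0 : Fin 3) - 1 = 2 from rfl, show (1 : Fin 3) - 1 = 0 from rfl,
    show (2 : Fin 3) - 1 = 1 from rfl] at h0 h1 h2
  split_ifs <;> omega

theorem two_mul_le_sum_of_le_add_inNeighbors {n : ℕ} [NeZero n] (f : Fin 3 × Fin n → ℕ)
    (hf : ∀ v, f v = 0 → 2 ≤ f (v.1, v.2 - 1) + f (v.1 - 1, v.2)) :
    2 * n ≤ ∑ v, f v := by
  let weight (j : Fin n) := ∑ i, f (i, j)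
  let zeros (j : Fin n) := #{i | f (i, j) = 0}
  have hstep (j : Fin n) : 2 + zeros j ≤ weight (j - 1) + zeros (j - 1) :=
    column_potential (fun i => f (i, j - 1)) (fun i => f (i, j)) fun i hi =>
      (add_comm _ _).le.trans' (hf (i, j) hi)
  have hshift (g : Fin n → ℕ) : ∑ j, g (j - 1) = ∑ j, g j := (Equiv.subRight 1).sum_comp g
  have hsum := sum_le_sum fun j (_ : j ∈ univ) => hstep j
  rw [sum_add_distrib, sum_add_distrib, hshift weight, hshift zeros, sum_const, card_univ,
    Fintype.card_fin, smul_eq_mul] at hsum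
  rw [Fintype.sum_prod_type, sum_comm]
  change 2 * n ≤ ∑ j, weight j
  omega

theorem exists_isIDF_sum_eq {n : ℕ} [NeZero n] (hn : 2 ≤ n) :
    ∃ f : Fin 3 × Fin n → ℕ,
      IsIDF (cartAdj (cycleAdj 3) (cycleAdj n)) f ∧ ∑ v, f v = 2 * n := by
  let χ := SimpleGraph.cycleGraph.tricoloring n hn
  have hc (j : Fin n) : χ (j - 1) ≠ χ j := by
    refine χ.valid (SimpleGraph.cycleGraph_adj'.2 (.inr ?_))
    rw [sub_sub_cancel, Fin.val_one', Nat.mod_eq_of_lt hn]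
  refine ⟨fun v => if v.1 = χ v.2 then 0 else 1, ?_, ?_⟩
  · refine (isIDF_cartAdj_cycleAdj_iff (by norm_num)).2 ⟨fun v => by split_ifs <;> omega, ?_⟩
    rintro ⟨i, j⟩ hv
    obtain rfl : i = χ j := by by_contra h; simp [h] at hv
    simp [(hc j).symm]
  · rw [Fintype.sum_prod_type, sum_comm]
    have h (z : Fin 3) : ∑ i : Fin 3, (if i = z then 0 else 1) = 2 := by decide +revert
    simp only [h, sum_const, card_univ, Fintype.card_fin, smul_eq_mul, mul_comm]

theorem italianDomNum_eq {V : Type*} [Fintype V] {adj : V → V → Prop} {k : ℕ}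
    (hex : ∃ f, IsIDF adj f ∧ ∑ v, f v = k) (hle : ∀ f, IsIDF adj f → k ≤ ∑ v, f v) :
    italianDomNum V adj = k := by
  refine le_antisymm (Nat.sInf_le hex) ?_
  obtain ⟨f, hf, hw⟩ := Nat.sInf_mem (⟨k, hex⟩ : {w | ∃ f, IsIDF adj f ∧ ∑ v, f v = w}.Nonempty)
  rw [italianDomNum, ← hw]
  exact hle f hf

theorem stmt9 (n : ℕ) (hn : 3 ≤ n) :
    italianDomNum (Fin 3 × Fin n) (cartAdj (cycleAdj 3) (cycleAdj n)) = 2 * n := by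
  have : NeZero n := ⟨by omega⟩
  refine italianDomNum_eq (exists_isIDF_sum_eq (by omega)) fun f hf => ?_
  exact two_mul_le_sum_of_le_add_inNeighbors f ((isIDF_cartAdj_cycleAdj_iff (by norm_num)).1 hf).2
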